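/- Let X be a simplicial complex and σ a nonempty finite collection of subcomplexes of X such that H̃_{|σ|-|τ|-1}(⋂τ, F) = 0 for every nonempty subcollection τ ⊆ σ, where F is a field. Then H̃_{|σ|-2}(⋃σ, F) = 0. -/

import Mathlib

open Finset

/-- The faces of an abstract simplicial complex: a set of nonempty finite sets of
vertices, closed under taking nonempty subsets. -/
def IsComplex {V : Type*} (S : Set (Finset V)) : Prop :=
  (∀ s ∈ S, s.Nonempty) ∧ ∀ s ∈ S, ∀ t ⊆ s, t.Nonempty → t ∈ S

/-- The nerve of a collection `Γ` of (sub)complexes, as a set of finsets of the index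
type: the simplices are the nonempty subcollections with a common face. -/
def nerveC {ι V : Type*} (Γ : ι → Set (Finset V)) : Set (Finset ι) :=
  {σ | σ.Nonempty ∧ (⋂ i ∈ (σ : Finset ι), Γ i).Nonempty}

/-- Simplicial `n`-chains (dimension `n`, i.e. on vertex sets of cardinality `n+1`)
on the vertex type `V`, with coefficients in `A`. -/
abbrev Chains (A V : Type*) [AddCommGroup A] [LinearOrder V] (n : ℕ) : Type _ :=
  {s : Finset V // s.card = n + 1} →₀ A

variable (R : Type*) [CommRing R] (A : Type*) [AddCommGroup A] [Module R A]
variable (V : Type*) [LinearOrder V]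

/-- The simplicial boundary map, with the usual alternating signs determined by the
linear order on the vertices. -/
noncomputable def bdry (n : ℕ) : Chains A V (n + 1) →ₗ[R] Chains A V n :=
  Finsupp.lsum R fun s =>
    ∑ v ∈ (s : Finset V).attach,
      ((-1 : ℤ) ^ (((s : Finset V).filter (fun w => w < v.1)).card)) •
        (Finsupp.lsingle (R := R) ⟨(s : Finset V).erase v.1, by
          rw [Finset.card_erase_of_mem v.2, s.2]; rfl⟩)

/-- The augmentation map on `0`-chains. -/
noncomputable def aug : Chains A V 0 →ₗ[R] A :=
  Finsupp.lsum R fun _ => LinearMap.id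

/-- Reduced cycles: kernel of the boundary map, resp. of the augmentation in degree 0. -/
noncomputable def cycles : (n : ℕ) → Submodule R (Chains A V n)
  | 0 => LinearMap.ker (aug R A V)
  | (n + 1) => LinearMap.ker (bdry R A V n)

/-- Chains supported on the simplices belonging to `S`. -/
def chainsIn (S : Set (Finset V)) (n : ℕ) : Submodule R (Chains A V n) :=
  Finsupp.supported A R {s : {s : Finset V // s.card = n + 1} | ↑s ∈ S}

/-- Reduced cycles of the complex `S`. -/
noncomputable def cyclesIn (S : Set (Finset V)) (n : ℕ) : Submodule R (Chains A V n) :=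
  cycles R A V n ⊓ chainsIn R A V S n

/-- Boundaries of chains of the complex `S`. -/
noncomputable def boundariesIn (S : Set (Finset V)) (n : ℕ) : Submodule R (Chains A V n) :=
  Submodule.map (bdry R A V n) (chainsIn R A V S (n + 1))

/-- Reduced simplicial homology of the complex `S` in degree `n ≥ 0`,
with coefficients in the `R`-module `A`. -/
noncomputable abbrev redH (S : Set (Finset V)) (n : ℕ) : Type _ :=
  (cyclesIn R A V S n) ⧸
    (Submodule.comap (cyclesIn R A V S n).subtype (boundariesIn R A V S n))

/-- Vanishing of the reduced homology of `S` in degree `n : ℤ`, with the convention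
that `H̃₋₁(S) = 0` iff `S` is nonempty (and trivial vanishing below degree `-1`). -/
def RedHVanish (S : Set (Finset V)) (n : ℤ) : Prop :=
  if n < -1 then True
  else if n = -1 then S.Nonempty
  else Subsingleton (redH R A V S n.toNat)

open scoped Classical in
/-- The dimension (rank) of the reduced homology of `S` in degree `n : ℤ`; in degree `-1`
it is `0` iff `S` is nonempty, in accordance with the convention. -/
noncomputable def redHRank (S : Set (Finset V)) (n : ℤ) : Cardinal :=
  if n < -1 then 0
  else if n = -1 then (if S.Nonempty then (0 : Cardinal) else 1)
  else Module.rank R (redH R A V S n.toNat)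



/-!
Mayer–Vietoris gluing: if `H̃_d(Y) = H̃_d(Z) = 0` and `H̃_{d-1}(Y ∩ Z) = 0`, then
`H̃_d(Y ∪ Z) = 0`. Indeed a cycle of `Y ∪ Z` splits as `x + y` with `x` on `Y` and `y`
on `Z`; then `∂x = -∂y` is a cycle of `Y ∩ Z`, so `∂x = ∂w` for a chain `w` of `Y ∩ Z`,
and `x - w`, `y + w` are cycles of `Y` and of `Z`, hence boundaries. In degree `0` the role
of `w` is played by a multiple of a vertex of `Y ∩ Z`.

The theorem follows by induction on the collection, in the stronger form where the degree
`d` is free: write `⋃ σ = (⋃ σ') ∪ Γ a`. Then `(⋃ σ') ∩ Γ a` is the union of the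
collection `Γ i ∩ Γ a` (`i ∈ σ'`), whose intersections are intersections of subcollections
of `σ` containing `a`, so the induction hypothesis applies to it in degree `d - 1`.
-/

theorem IsComplex.inter {α : Type*} {Y Z : Set (Finset α)} (hY : IsComplex Y)
    (hZ : IsComplex Z) : IsComplex (Y ∩ Z) :=
  ⟨fun s hs => hY.1 s hs.1,
    fun s hs t hts ht => ⟨hY.2 s hs.1 t hts ht, hZ.2 s hs.2 t hts ht⟩⟩

theorem IsComplex.biUnion {α ι : Type*} {Γ : ι → Set (Finset α)}
    (hΓ : ∀ i, IsComplex (Γ i)) (σ : Finset ι) : IsComplex (⋃ i ∈ σ, Γ i) := by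
  refine ⟨fun s hs => ?_, fun s hs t hts ht => ?_⟩
  · obtain ⟨i, -, hi⟩ := Set.mem_iUnion₂.1 hs
    exact (hΓ i).1 s hi
  · obtain ⟨i, hiσ, hi⟩ := Set.mem_iUnion₂.1 hs
    exact Set.mem_iUnion₂.2 ⟨i, hiσ, (hΓ i).2 s hi t hts ht⟩

theorem IsComplex.exists_singleton_mem {α : Type*} {S : Set (Finset α)} (hS : IsComplex S)
    (hne : S.Nonempty) : ∃ v, {v} ∈ S := by
  obtain ⟨s, hs⟩ := hne
  obtain ⟨v, hv⟩ := hS.1 s hs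
  exact ⟨v, hS.2 s hs {v} (singleton_subset_iff.2 hv) (singleton_nonempty v)⟩

variable {R A V}

theorem bdry_single (n : ℕ) (s : {s : Finset V // s.card = n + 1 + 1}) (a : A) :
    bdry R A V n (Finsupp.single s a) =
      ∑ v ∈ (s : Finset V).attach,
        ((-1 : ℤ) ^ ((s : Finset V).filter (· < v.1)).card) •
          Finsupp.single (⟨(s : Finset V).erase v.1, by
            rw [card_erase_of_mem v.2, s.2]; rfl⟩ : {t : Finset V // t.card = n + 1}) a := by
  simp [bdry]

theorem aug_single (s : {s : Finset V // s.card = 0 + 1}) (a : A) :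
    aug R A V (Finsupp.single s a) = a := by
  simp [aug]

theorem neg_one_pow_card_filter_lt_erase_add_swap {s : Finset V} {u v : V}
    (hu : u ∈ s) (hv : v ∈ s) (huv : u ≠ v) :
    (-1 : ℤ) ^ (s.filter (· < u)).card * (-1) ^ ((s.erase u).filter (· < v)).card +
      (-1) ^ (s.filter (· < v)).card * (-1) ^ ((s.erase v).filter (· < u)).card = 0 := by
  wlog h : u < v generalizing u v
  · rw [add_comm]
    exact this hv hu huv.symm (lt_of_le_of_ne (not_lt.1 h) huv.symm)
  have hv' : ((s.erase u).filter (· < v)).card + 1 = (s.filter (· < v)).card := by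
    rw [filter_erase, card_erase_add_one (mem_filter.2 ⟨hu, h⟩)]
  have hu' : (s.erase v).filter (· < u) = s.filter (· < u) := by
    rw [filter_erase, erase_eq_of_notMem (by simp [h.le])]
  rw [hu', ← hv']
  ring

theorem bdry_bdry_single (n : ℕ) (s : {s : Finset V // s.card = n + 1 + 1 + 1}) (a : A) :
    bdry R A V n (bdry R A V (n + 1) (Finsupp.single s a)) = 0 := by
  simp only [bdry_single, map_sum, map_zsmul, Finset.smul_sum, smul_smul]
  rw [Finset.sum_sigma']
  refine Finset.sum_involution (fun p _ => ⟨⟨p.2.1, mem_of_mem_erase p.2.2⟩,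
      ⟨p.1.1, mem_erase.2 ⟨(ne_of_mem_erase p.2.2).symm, p.1.2⟩⟩⟩)
    ?_ ?_ (fun _ _ => mem_sigma.2 ⟨mem_attach _ _, mem_attach _ _⟩) (fun _ _ => rfl)
  · rintro ⟨⟨v, hv⟩, ⟨u, hu⟩⟩ -
    have hus := mem_of_mem_erase hu
    have hswap : (((s : Finset V).erase v).erase u) = ((s : Finset V).erase u).erase v :=
      erase_right_comm
    simp only [hswap, ← add_smul]
    rw [neg_one_pow_card_filter_lt_erase_add_swap hv hus (ne_of_mem_erase hu).symm, zero_smul]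
  · rintro ⟨⟨v, hv⟩, ⟨u, hu⟩⟩ - - huv
    exact ne_of_mem_erase hu (congrArg (fun p => p.1.1) huv)

theorem aug_bdry_single (s : {s : Finset V // s.card = 0 + 1 + 1}) (a : A) :
    aug R A V (bdry R A V 0 (Finsupp.single s a)) = 0 := by
  obtain ⟨p, q, hpq, hs⟩ := card_eq_two.1 s.2
  wlog h : p < q generalizing p q
  · exact this q p hpq.symm (by rw [hs, pair_comm]) (lt_of_le_of_ne (not_lt.1 h) hpq.symm)
  simp only [bdry_single, map_sum, map_zsmul, aug_single]
  rw [sum_attach (s : Finset V) fun v => ((-1 : ℤ) ^ ((s : Finset V).filter (· < v)).card) • a,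
    hs, sum_pair hpq]
  simp [filter_insert, filter_singleton, h, h.not_gt]

theorem bdry_bdry (n : ℕ) (x : Chains A V (n + 1 + 1)) :
    bdry R A V n (bdry R A V (n + 1) x) = 0 := by
  have : (bdry R A V n).comp (bdry R A V (n + 1)) = 0 :=
    Finsupp.lhom_ext fun s a => bdry_bdry_single n s a
  exact LinearMap.congr_fun this x

theorem aug_bdry (x : Chains A V 1) : aug R A V (bdry R A V 0 x) = 0 := by
  have : (aug R A V).comp (bdry R A V 0) = 0 :=
    Finsupp.lhom_ext fun s a => aug_bdry_single s a
  exact LinearMap.congr_fun this x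

theorem bdry_mem_cycles (m : ℕ) (x : Chains A V (m + 1)) : bdry R A V m x ∈ cycles R A V m := by
  cases m with
  | zero => exact aug_bdry x
  | succ k => exact bdry_bdry k x

theorem chainsIn_union (Y Z : Set (Finset V)) (n : ℕ) :
    chainsIn R A V (Y ∪ Z) n = chainsIn R A V Y n ⊔ chainsIn R A V Z n :=
  Finsupp.supported_union _ _

theorem chainsIn_inter (Y Z : Set (Finset V)) (n : ℕ) :
    chainsIn R A V (Y ∩ Z) n = chainsIn R A V Y n ⊓ chainsIn R A V Z n :=
  Finsupp.supported_inter _ _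

theorem chainsIn_mono {S T : Set (Finset V)} (h : S ⊆ T) (n : ℕ) :
    chainsIn R A V S n ≤ chainsIn R A V T n :=
  Finsupp.supported_mono fun _ hs => h hs

theorem boundariesIn_mono {S T : Set (Finset V)} (h : S ⊆ T) (n : ℕ) :
    boundariesIn R A V S n ≤ boundariesIn R A V T n :=
  Submodule.map_mono (chainsIn_mono h _)

theorem single_mem_chainsIn {S : Set (Finset V)} {n : ℕ} {s : {s : Finset V // s.card = n + 1}}
    (hs : (s : Finset V) ∈ S) (a : A) : Finsupp.single s a ∈ chainsIn R A V S n :=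
  Finsupp.single_mem_supported R a hs

theorem bdry_mem_chainsIn {S : Set (Finset V)} (hS : IsComplex S) {n : ℕ}
    {x : Chains A V (n + 1)} (hx : x ∈ chainsIn R A V S (n + 1)) :
    bdry R A V n x ∈ chainsIn R A V S n := by
  rw [← Finsupp.sum_single x, Finsupp.sum, map_sum]
  refine sum_mem fun s hs => ?_
  rw [bdry_single]
  refine sum_mem fun v _ => zsmul_mem (single_mem_chainsIn ?_ _) _
  refine hS.2 _ (hx hs) _ (erase_subset _ _) (card_pos.1 ?_)
  rw [card_erase_of_mem v.2, s.2]
  omega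

theorem subsingleton_redH_iff {S : Set (Finset V)} {n : ℕ} :
    Subsingleton (redH R A V S n) ↔ cyclesIn R A V S n ≤ boundariesIn R A V S n := by
  rw [Submodule.Quotient.subsingleton_iff, Submodule.eq_top_iff']
  exact ⟨fun h z hz => h ⟨z, hz⟩, fun h z => h z.2⟩

theorem redHVanish_of_lt {S : Set (Finset V)} {d : ℤ} (hd : d < -1) : RedHVanish R A V S d := by
  simp [RedHVanish, hd]

theorem redHVanish_neg_one {S : Set (Finset V)} : RedHVanish R A V S (-1) ↔ S.Nonempty := by
  simp [RedHVanish]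

theorem redHVanish_natCast {S : Set (Finset V)} {n : ℕ} :
    RedHVanish R A V S n ↔ cyclesIn R A V S n ≤ boundariesIn R A V S n := by
  rw [RedHVanish, if_neg (by omega), if_neg (by omega), Int.toNat_natCast, subsingleton_redH_iff]

section MayerVietoris

variable {Y Z : Set (Finset V)}

theorem add_mem_boundariesIn_union {n : ℕ} (hY : cyclesIn R A V Y n ≤ boundariesIn R A V Y n)
    (hZ : cyclesIn R A V Z n ≤ boundariesIn R A V Z n) {x y e : Chains A V n}
    (hx : x ∈ chainsIn R A V Y n) (hy : y ∈ chainsIn R A V Z n)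
    (he : e ∈ chainsIn R A V (Y ∩ Z) n) (hxe : x - e ∈ cycles R A V n)
    (hxy : x + y ∈ cycles R A V n) : x + y ∈ boundariesIn R A V (Y ∪ Z) n := by
  have hye : y + e ∈ cycles R A V n := by
    simpa using sub_mem hxy hxe
  rw [chainsIn_inter] at he
  rw [show x + y = (x - e) + (y + e) by abel]
  exact add_mem (boundariesIn_mono Set.subset_union_left n (hY ⟨hxe, sub_mem hx he.1⟩))
    (boundariesIn_mono Set.subset_union_right n (hZ ⟨hye, add_mem hy he.2⟩))

theorem cyclesIn_union_le_zero (hY : IsComplex Y) (hZ : IsComplex Z) (hYZ : (Y ∩ Z).Nonempty)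
    (hYv : cyclesIn R A V Y 0 ≤ boundariesIn R A V Y 0)
    (hZv : cyclesIn R A V Z 0 ≤ boundariesIn R A V Z 0) :
    cyclesIn R A V (Y ∪ Z) 0 ≤ boundariesIn R A V (Y ∪ Z) 0 := by
  rintro _ ⟨hz, hzY⟩
  rw [SetLike.mem_coe, chainsIn_union] at hzY
  obtain ⟨x, hx, y, hy, rfl⟩ := Submodule.mem_sup.1 hzY
  obtain ⟨v, hv⟩ := (hY.inter hZ).exists_singleton_mem hYZ
  refine add_mem_boundariesIn_union hYv hZv hx hy
    (single_mem_chainsIn (s := ⟨{v}, card_singleton v⟩) hv (aug R A V x)) ?_ hz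
  change aug R A V _ = 0
  rw [map_sub, aug_single, sub_self]

theorem cyclesIn_union_le_succ (hY : IsComplex Y) (hZ : IsComplex Z) {m : ℕ}
    (hYZ : cyclesIn R A V (Y ∩ Z) m ≤ boundariesIn R A V (Y ∩ Z) m)
    (hYv : cyclesIn R A V Y (m + 1) ≤ boundariesIn R A V Y (m + 1))
    (hZv : cyclesIn R A V Z (m + 1) ≤ boundariesIn R A V Z (m + 1)) :
    cyclesIn R A V (Y ∪ Z) (m + 1) ≤ boundariesIn R A V (Y ∪ Z) (m + 1) := by
  rintro _ ⟨hz, hzY⟩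
  rw [SetLike.mem_coe, chainsIn_union] at hzY
  obtain ⟨x, hx, y, hy, rfl⟩ := Submodule.mem_sup.1 hzY
  have hxy : bdry R A V m x = -bdry R A V m y :=
    eq_neg_of_add_eq_zero_left (by rw [← map_add]; exact hz)
  have hbx : bdry R A V m x ∈ cyclesIn R A V (Y ∩ Z) m := by
    refine Submodule.mem_inf.2 ⟨bdry_mem_cycles m x, ?_⟩
    rw [chainsIn_inter, Submodule.mem_inf, hxy]
    exact ⟨hxy ▸ bdry_mem_chainsIn hY hx, neg_mem (bdry_mem_chainsIn hZ hy)⟩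
  obtain ⟨w, hw, hwx⟩ := hYZ hbx
  refine add_mem_boundariesIn_union hYv hZv hx hy hw ?_ hz
  change bdry R A V m _ = 0
  rw [map_sub, hwx, sub_self]

theorem RedHVanish.union (hY : IsComplex Y) (hZ : IsComplex Z) {d : ℤ}
    (hYv : RedHVanish R A V Y d) (hZv : RedHVanish R A V Z d)
    (hYZ : RedHVanish R A V (Y ∩ Z) (d - 1)) : RedHVanish R A V (Y ∪ Z) d := by
  obtain hd | rfl | hd := lt_trichotomy d (-1)
  · exact redHVanish_of_lt hd
  · exact redHVanish_neg_one.2 ((redHVanish_neg_one.1 hYv).mono Set.subset_union_left)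
  lift d to ℕ using (by omega)
  rw [redHVanish_natCast] at hYv hZv ⊢
  cases d with
  | zero =>
    exact cyclesIn_union_le_zero hY hZ (redHVanish_neg_one.1 (by simpa using hYZ)) hYv hZv
  | succ m =>
    exact cyclesIn_union_le_succ hY hZ (redHVanish_natCast.1 (by simpa using hYZ)) hYv hZv

end MayerVietoris

theorem RedHVanish.biUnion {ι : Type*} {σ : Finset ι} (hσ : σ.Nonempty) :
    ∀ {Γ : ι → Set (Finset V)}, (∀ i, IsComplex (Γ i)) → ∀ {d : ℤ},
      (∀ τ ⊆ σ, τ.Nonempty → RedHVanish R A V (⋂ i ∈ τ, Γ i) (d - τ.card + 1)) →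
      RedHVanish R A V (⋃ i ∈ σ, Γ i) d := by
  induction hσ using Finset.Nonempty.cons_induction with
  | singleton a =>
    intro Γ _ d h
    simpa using h {a} subset_rfl (singleton_nonempty a)
  | cons a s ha hs ih =>
    intro Γ hΓ d h
    have hY := ih hΓ fun τ hτ => h τ (hτ.trans (subset_cons ha))
    have hZ : RedHVanish R A V (Γ a) d := by
      simpa using h {a} (singleton_subset_iff.2 (mem_cons_self a s)) (singleton_nonempty a)
    have hYZ : RedHVanish R A V ((⋃ i ∈ s, Γ i) ∩ Γ a) (d - 1) := by
      rw [Set.iUnion₂_inter]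
      refine ih (fun i => (hΓ i).inter (hΓ a)) fun τ hτ hτne => ?_
      have hτa : a ∉ τ := fun haτ => ha (hτ haτ)
      have hinter : ⋂ i ∈ cons a τ hτa, Γ i = ⋂ i ∈ τ, (Γ i ∩ Γ a) := by
        rw [← set_biInter_coe, ← set_biInter_coe, Set.biInter_inter (coe_nonempty.2 hτne),
          coe_cons, Set.biInter_insert, Set.inter_comm]
      have hdeg : d - (cons a τ hτa).card + 1 = d - 1 - τ.card + 1 := by
        rw [card_cons]
        push_cast
        ring
      simpa only [hinter, hdeg] using h _ (cons_subset_cons.2 hτ) (cons_nonempty hτa)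
    have hunion : ⋃ i ∈ cons a s ha, Γ i = (⋃ i ∈ s, Γ i) ∪ Γ a := by
      rw [← set_biUnion_coe, ← set_biUnion_coe, coe_cons, Set.biUnion_insert, Set.union_comm]
    rw [hunion]
    exact hY.union (IsComplex.biUnion hΓ s) (hΓ a) hZ hYZ

theorem union_vanishing_of_intersections_general {V ι : Type*} [LinearOrder V] [Fintype ι]
    [Nonempty ι] (F : Type*) [Field F]
    (X : Set (Finset V))
    (Γ : ι → Set (Finset V)) (hΓ : ∀ i, IsComplex (Γ i) ∧ Γ i ⊆ X)
    (h : ∀ τ : Finset ι, τ.Nonempty →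
      RedHVanish F F V (⋂ i ∈ τ, Γ i) ((Fintype.card ι : ℤ) - τ.card - 1)) :
    RedHVanish F F V (⋃ i, Γ i) ((Fintype.card ι : ℤ) - 2) := by
  have hunion := RedHVanish.biUnion (R := F) (A := F) univ_nonempty (fun i => (hΓ i).1)
    (d := (Fintype.card ι : ℤ) - 2) fun τ _ hτ => by
      convert h τ hτ using 2
      ring
  simpa using hunion

/-- If `H̃_{|σ|-|τ|-1}(⋂τ) = 0` for every nonempty subcollection `τ` of `σ`, then
`H̃_{|σ|-2}(⋃σ) = 0`. -/
theorem union_vanishing_of_intersections {V ι : Type*} [LinearOrder V] [Fintype ι]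
    [Nonempty ι] (F : Type*) [Field F]
    (X : Set (Finset V)) (hX : IsComplex X)
    (Γ : ι → Set (Finset V)) (hΓ : ∀ i, IsComplex (Γ i) ∧ Γ i ⊆ X)
    (h : ∀ τ : Finset ι, τ.Nonempty →
      RedHVanish F F V (⋂ i ∈ τ, Γ i) ((Fintype.card ι : ℤ) - τ.card - 1)) :
    RedHVanish F F V (⋃ i, Γ i) ((Fintype.card ι : ℤ) - 2) :=
  union_vanishing_of_intersections_general F X Γ hΓ h
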